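/- Reduction of joint attacks to single attacks, Claim 1: Let (S,R0) be a joint-attack network and (S',R') its associated ordinary argumentation framework. If λ is a legitimate Caminada labelling of (S',R'), then the restriction of λ to S is a legitimate Caminada–Gabbay labelling of (S,R0). -/
import Mathlib


/-- The three Caminada labels. -/
inductive Lab
  | inn | out | und
  deriving DecidableEq

/-- A legitimate Caminada labelling of an ordinary argumentation framework. -/
def Legitimate {T : Type*} (R : T → T → Prop) (lam : T → Lab) : Prop :=
  ∀ x : T,
    (lam x = Lab.inn ↔ ∀ z, R z x → lam z = Lab.out) ∧
    (lam x = Lab.out ↔ ∃ z, R z x ∧ lam z = Lab.inn) ∧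
    (lam x = Lab.und ↔ ((∀ z, R z x → lam z ≠ Lab.inn) ∧ ∃ z, R z x ∧ lam z = Lab.und))

/-- A legitimate Caminada–Gabbay labelling of a joint-attack network `(S, R0)`. -/
def LegitimateCG {S : Type*} (R0 : Set S → S → Prop) (lam : S → Lab) : Prop :=
  ∀ x : S,
    (lam x = Lab.inn ↔ ∀ G, R0 G x → ∃ y ∈ G, lam y = Lab.out) ∧
    (lam x = Lab.out ↔ ∃ G, R0 G x ∧ ∀ y ∈ G, lam y = Lab.inn) ∧
    (lam x = Lab.und ↔ ((∀ G, R0 G x → ∃ y ∈ G, lam y ≠ Lab.inn) ∧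
      ∃ G, R0 G x ∧ ∀ y ∈ G, lam y = Lab.inn ∨ lam y = Lab.und))

/-- Raw points of the associated framework: the original arguments `base x`,
the auxiliary points `x(G)` (`xg G x`) and `e(x,G,z)` (`e x G z`). -/
inductive Aux (S : Type*)
  | base : S → Aux S
  | xg : Set S → S → Aux S
  | e : S → Set S → S → Aux S

/-- The points that actually occur in the associated framework of `(S, R0)`:
all original arguments, `x(G)` only when `G R0 x`, and `e(x,G,z)` only when
`G R0 x` and `z ∈ G`. -/
def AuxValid {S : Type*} (R0 : Set S → S → Prop) : Aux S → Prop
  | .base _ => True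
  | .xg G x => R0 G x
  | .e x G z => R0 G x ∧ z ∈ G

/-- The attack relation of the associated framework on raw points:
`z R' e(x,G,z)`, `e(x,G,z) R' x(G)`, and `x(G) R' x`. -/
def AuxR {S : Type*} (R0 : Set S → S → Prop) : Aux S → Aux S → Prop
  | .base z, .e x G z' => z' = z ∧ R0 G x ∧ z ∈ G
  | .e x G z, .xg G' x' => x' = x ∧ G' = G ∧ R0 G x ∧ z ∈ G
  | .xg G x, .base x' => x' = x ∧ R0 G x
  | _, _ => False

/-- The carrier `S'` of the associated ordinary framework. -/
def SP (S : Type*) (R0 : Set S → S → Prop) := {p : Aux S // AuxValid R0 p}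

/-- The attack relation `R'` of the associated ordinary framework. -/
def RP {S : Type*} (R0 : Set S → S → Prop) : SP S R0 → SP S R0 → Prop :=
  fun a b => AuxR R0 a.1 b.1

/-- The embedding of `S` into `S'`. -/
def embed {S : Type*} (R0 : Set S → S → Prop) (x : S) : SP S R0 :=
  ⟨Aux.base x, by simp [AuxValid]⟩


section Helpers

variable {S : Type*} {R0 : Set S → S → Prop}

lemma lab_cases (l : Lab) : l = .inn ∨ l = .out ∨ l = .und := by cases l <;> simp

lemma attacker_e {x z : S} {G : Set S} (h : R0 G x) (hz : z ∈ G) (a : SP S R0) :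
    RP R0 a ⟨.e x G z, h, hz⟩ ↔ a.1 = Aux.base z := by
  obtain ⟨p, hp⟩ := a
  cases p with
  | base w =>
      show (z = w ∧ R0 G x ∧ w ∈ G) ↔ Aux.base w = Aux.base z
      constructor
      · rintro ⟨rfl, -⟩; rfl
      · intro hEq; cases hEq; exact ⟨rfl, h, hz⟩
  | xg G' x' => show False ↔ _; simp
  | e x' G' z' => show False ↔ _; simp

lemma attacker_xg {x : S} {G : Set S} (h : R0 G x) (a : SP S R0) :
    RP R0 a ⟨.xg G x, h⟩ ↔ ∃ z ∈ G, a.1 = Aux.e x G z := by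
  obtain ⟨p, hp⟩ := a
  cases p with
  | base w => show False ↔ _; simp
  | xg G' x' => show False ↔ _; simp
  | e x' G' z' =>
      show (x = x' ∧ G = G' ∧ R0 G' x' ∧ z' ∈ G') ↔ _
      constructor
      · rintro ⟨rfl, rfl, -, hz⟩; exact ⟨z', hz, rfl⟩
      · rintro ⟨z, hz, hEq⟩; cases hEq; exact ⟨rfl, rfl, h, hz⟩

lemma attacker_base {x : S} (a : SP S R0) :
    RP R0 a (embed R0 x) ↔ ∃ G, R0 G x ∧ a.1 = Aux.xg G x := by
  obtain ⟨p, hp⟩ := a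
  cases p with
  | base w => show False ↔ _; simp
  | e x' G' z' => show False ↔ _; simp
  | xg G' x' =>
      show (x = x' ∧ R0 G' x') ↔ _
      constructor
      · rintro ⟨rfl, hG⟩; exact ⟨G', hG, rfl⟩
      · rintro ⟨G, hG, hEq⟩; cases hEq; exact ⟨rfl, hG⟩

variable {lam : SP S R0 → Lab}

lemma e_lab (hlam : Legitimate (RP R0) lam) {x z : S} {G : Set S}
    (h : R0 G x) (hz : z ∈ G) :
    (lam ⟨.e x G z, h, hz⟩ = .inn ↔ lam (embed R0 z) = .out) ∧
    (lam ⟨.e x G z, h, hz⟩ = .out ↔ lam (embed R0 z) = .inn) ∧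
    (lam ⟨.e x G z, h, hz⟩ = .und ↔ lam (embed R0 z) = .und) := by
  obtain ⟨h1, h2, h3⟩ := hlam ⟨.e x G z, h, hz⟩
  simp only [attacker_e h hz] at h1 h2 h3
  refine ⟨?_, ?_, ?_⟩
  · rw [h1]; constructor
    · intro H; exact H (embed R0 z) rfl
    · intro H a ha
      obtain ⟨p, hp⟩ := a; cases ha; exact H
  · rw [h2]; constructor
    · rintro ⟨⟨p, hp⟩, ha, H⟩; cases ha; exact H
    · intro H; exact ⟨embed R0 z, rfl, H⟩
  · rw [h3]; constructor
    · rintro ⟨-, ⟨p, hp⟩, ha, H⟩; cases ha; exact H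
    · intro H
      refine ⟨?_, embed R0 z, rfl, H⟩
      rintro ⟨p, hp⟩ ha hin
      cases ha
      have hin' : lam (embed R0 z) = Lab.inn := hin
      rw [H] at hin'; exact Lab.noConfusion hin' 

lemma xg_lab (hlam : Legitimate (RP R0) lam) {x : S} {G : Set S} (h : R0 G x) :
    (lam ⟨.xg G x, h⟩ = .inn ↔ ∀ z ∈ G, lam (embed R0 z) = .inn) ∧
    (lam ⟨.xg G x, h⟩ = .out ↔ ∃ z ∈ G, lam (embed R0 z) = .out) ∧
    (lam ⟨.xg G x, h⟩ = .und ↔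
      ((∀ z ∈ G, lam (embed R0 z) ≠ .out) ∧ ∃ z ∈ G, lam (embed R0 z) = .und)) := by
  obtain ⟨h1, h2, h3⟩ := hlam ⟨.xg G x, h⟩
  simp only [attacker_xg h] at h1 h2 h3
  refine ⟨?_, ?_, ?_⟩
  · rw [h1]; constructor
    · intro H z hz
      exact ((e_lab hlam h hz).2.1).mp (H ⟨.e x G z, h, hz⟩ ⟨z, hz, rfl⟩)
    · rintro H ⟨p, hp⟩ ⟨z, hz, ha⟩
      cases ha
      exact ((e_lab (x := x) hlam h hz).2.1).mpr (H z hz)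
  · rw [h2]; constructor
    · rintro ⟨⟨p, hp⟩, ⟨z, hz, ha⟩, H⟩
      cases ha
      exact ⟨z, hz, ((e_lab (x := x) hlam h hz).1).mp H⟩
    · rintro ⟨z, hz, H⟩
      exact ⟨⟨.e x G z, h, hz⟩, ⟨z, hz, rfl⟩, ((e_lab hlam h hz).1).mpr H⟩
  · rw [h3]; constructor
    · rintro ⟨H1, ⟨p, hp⟩, ⟨z, hz, ha⟩, H2⟩
      cases ha
      refine ⟨fun w hw hout =>
        H1 ⟨.e x G w, h, hw⟩ ⟨w, hw, rfl⟩ (((e_lab hlam h hw).1).mpr hout),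
        z, hz, ((e_lab (x := x) hlam h hz).2.2).mp H2⟩
    · rintro ⟨H1, z, hz, H2⟩
      refine ⟨?_, ⟨.e x G z, h, hz⟩, ⟨z, hz, rfl⟩, ((e_lab hlam h hz).2.2).mpr H2⟩
      rintro ⟨p, hp⟩ ⟨w, hw, ha⟩ hin
      cases ha
      exact H1 w hw (((e_lab (x := x) hlam h hw).1).mp hin)

end Helpers

/-- Reduction of joint attacks to single attacks, Claim 1: the restriction to `S`
of a legitimate Caminada labelling of the associated framework `(S', R')` is a
legitimate Caminada–Gabbay labelling of `(S, R0)`. -/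
theorem joint_reduction_claim1
    {S : Type*} [Fintype S] [Nonempty S]
    (R0 : Set S → S → Prop) (hne : ∀ G x, R0 G x → G.Nonempty)
    (lam : SP S R0 → Lab) (hlam : Legitimate (RP R0) lam) :
    LegitimateCG R0 (fun x => lam (embed R0 x)) := by
  intro x
  obtain ⟨h1, h2, h3⟩ := hlam (embed R0 x)
  simp only [attacker_base] at h1 h2 h3
  refine ⟨?_, ?_, ?_⟩
  · rw [h1]; constructor
    · intro H G hG
      exact ((xg_lab hlam hG).2.1).mp (H ⟨.xg G x, hG⟩ ⟨G, hG, rfl⟩)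
    · rintro H ⟨p, hp⟩ ⟨G, hG, ha⟩
      cases ha
      exact ((xg_lab hlam hG).2.1).mpr (H G hG)
  · rw [h2]; constructor
    · rintro ⟨⟨p, hp⟩, ⟨G, hG, ha⟩, H⟩
      cases ha
      exact ⟨G, hG, ((xg_lab hlam hG).1).mp H⟩
    · rintro ⟨G, hG, H⟩
      exact ⟨⟨.xg G x, hG⟩, ⟨G, hG, rfl⟩, ((xg_lab hlam hG).1).mpr H⟩
  · rw [h3]; constructor
    · rintro ⟨H1, ⟨p, hp⟩, ⟨G, hG, ha⟩, H2⟩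
      cases ha
      obtain ⟨Hno, z, hz, Hund⟩ := ((xg_lab hlam hG).2.2).mp H2
      constructor
      · intro G' hG'
        have hni : lam ⟨.xg G' x, hG'⟩ ≠ .inn := H1 ⟨.xg G' x, hG'⟩ ⟨G', hG', rfl⟩
        by_contra Hc
        push_neg at Hc
        exact hni (((xg_lab hlam hG').1).mpr fun w hw => Hc w hw)
      · refine ⟨G, hG, fun y hy => ?_⟩
        rcases lab_cases (lam (embed R0 y)) with h' | h' | h'
        · exact Or.inl h'
        · exact absurd h' (Hno y hy)
        · exact Or.inr h'
    · rintro ⟨H1, G, hG, H2⟩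
      have Hund : lam ⟨.xg G x, hG⟩ = .und := by
        rcases lab_cases (lam ⟨.xg G x, hG⟩) with h' | h' | h'
        · obtain ⟨y, hy, hyn⟩ := H1 G hG
          exact absurd (((xg_lab hlam hG).1).mp h' y hy) hyn
        · obtain ⟨z, hz, hzo⟩ := ((xg_lab hlam hG).2.1).mp h'
          rcases H2 z hz with h'' | h''
          · have hh : lam (embed R0 z) = Lab.inn := h''
            rw [hzo] at hh; exact Lab.noConfusion hh
          · have hh : lam (embed R0 z) = Lab.und := h''
            rw [hzo] at hh; exact Lab.noConfusion hh
        · exact h'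
      refine ⟨?_, ⟨.xg G x, hG⟩, ⟨G, hG, rfl⟩, Hund⟩
      rintro ⟨p, hp⟩ ⟨G', hG', ha⟩ hin
      cases ha
      obtain ⟨y, hy, hyn⟩ := H1 G' hG'
      exact hyn (((xg_lab hlam hG').1).mp hin y hy)
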